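/- For every word w over Σ, the number of arches in the arch factorization of w equals the universality index ι(w). -/

import Mathlib

open List

section Defs

variable {α : Type*}

/-- A word `w` is `k`-universal if every word of length at most `k` is a subsequence of `w`. -/
def IsKUniversal [Fintype α] (k : ℕ) (w : List α) : Prop :=
  ∀ u : List α, u.length ≤ k → u.Sublist w

/-- The universality index `ι(w)`: the largest `k` such that `w` is `k`-universal. -/
noncomputable def univIndex [Fintype α] (w : List α) : ℕ :=
  sSup {k | IsKUniversal k w}

/-- `c`-fold concatenation (power) of a word. -/
def wpow (u : List α) (c : ℕ) : List α := (List.replicate c u).flatten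

/-- Auxiliary (fuelled) computation of the arch factorization: returns the list of
arches and the rest. Each arch is the shortest prefix of the remaining suffix
containing every letter of the alphabet. -/
noncomputable def archFactAux [Fintype α] [DecidableEq α] :
    ℕ → List α → List (List α) × List α
  | 0, w => ([], w)
  | fuel + 1, w =>
    if Finset.univ ⊆ w.toFinset then
      let n := sInf {n | Finset.univ ⊆ (w.take n).toFinset}
      let p := archFactAux fuel (w.drop n)
      (w.take n :: p.1, p.2)
    else ([], w)

/-- The arch factorization of `w`: the list of arches together with the rest. -/
noncomputable def archFact [Fintype α] [DecidableEq α] (w : List α) :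
    List (List α) × List α :=
  archFactAux w.length w

/-- `γ(w)`: the distinct letters of `w` in order of their first occurrence. -/
def gammaWord [DecidableEq α] (w : List α) : List α := w.reverse.dedup.reverse

/-- The suffix of `w` strictly after the first occurrence of the letter `a`. -/
def afterFirst [DecidableEq α] (a : α) (w : List α) : List α :=
  w.drop (w.idxOf a + 1)

/-- `ι_a(w)`: the universality index of the suffix of `w` after the first occurrence of `a`. -/
noncomputable def iotaLetter [Fintype α] [DecidableEq α] (a : α) (w : List α) : ℕ :=
  univIndex (afterFirst a w)

/-- `R_a(w)`: the alphabet of the rest of the arch factorization of the suffix of `w`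
after the first occurrence of `a`. -/
noncomputable def restLetter [Fintype α] [DecidableEq α] (a : α) (w : List α) : Finset α :=
  ((archFact (afterFirst a w)).2).toFinset

/-- `Subseq_k(w)`: the set of subsequences of `w` of length at most `k`. -/
def subseqK (k : ℕ) (w : List α) : Set (List α) :=
  {u | u.length ≤ k ∧ u.Sublist w}

/-- Simon's congruence `u ∼_k v`. -/
def SimonCongr (k : ℕ) (u v : List α) : Prop := subseqK k u = subseqK k v

/-- Applying a substitution `h` to a pattern: replace each variable occurrence by its
image and leave terminal letters unchanged. -/
def applySub {X : Type*} (h : X → List α) (p : List (α ⊕ X)) : List α :=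
  p.flatMap (Sum.elim (fun a => [a]) h)

/-- A permutation word of the alphabet: every letter occurs exactly once. -/
def IsPermWord [DecidableEq α] (γ : List α) : Prop :=
  ∀ a : α, γ.count a = 1

end Defs

/-!
Cutting off the first arch lowers the universality index by exactly one. Every letter occurs in
the arch, so any first letter of a subsequence can be read inside it; conversely the last letter
`b` of the arch occurs nowhere earlier in it, so `b :: x` embeds into the word only if `x`
embeds into what follows the arch. A word missing a letter has index `0` and no arch.
-/

namespace List

variable {α : Type*}

theorem univ_subset_toFinset_iff [Fintype α] [DecidableEq α] {l : List α} :
    Finset.univ ⊆ l.toFinset ↔ ∀ a, a ∈ l := by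
  simp [Finset.univ_subset_iff, Finset.eq_univ_iff_forall]

theorem cons_sublist_append_cons_iff {a : α} {x u v : List α} (ha : a ∉ u) :
    a :: x <+ u ++ a :: v ↔ x <+ v := by
  refine ⟨fun h => ?_, fun h => (h.cons_cons a).trans (sublist_append_right u _)⟩
  obtain ⟨_ | ⟨c, l₁⟩, l₂, hx, hl₁, hl₂⟩ := sublist_append_iff.1 h
  · rw [nil_append] at hx
    exact cons_sublist_cons.1 (hx ▸ hl₂)
  · obtain ⟨rfl, -⟩ := cons_eq_cons.1 hx
    exact absurd (hl₁.subset mem_cons_self) ha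

end List

section Universality

variable {α : Type*} [Fintype α]

theorem isKUniversal_zero (w : List α) : IsKUniversal 0 w := fun u hu => by
  rw [length_eq_zero_iff.1 (Nat.le_zero.1 hu)]
  exact nil_sublist w

theorem IsKUniversal.mono {k l : ℕ} {w : List α} (hkl : k ≤ l) (h : IsKUniversal l w) :
    IsKUniversal k w := fun u hu => h u (hu.trans hkl)

theorem isKUniversal_one_iff {w : List α} : IsKUniversal 1 w ↔ ∀ a, a ∈ w := by
  refine ⟨fun h a => singleton_sublist.1 (h [a] le_rfl), fun h u hu => ?_⟩
  match u, hu with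
  | [], _ => exact nil_sublist w
  | [a], _ => exact singleton_sublist.2 (h a)

theorem isKUniversal_succ_append_cons_iff {k : ℕ} {u v : List α} {b : α}
    (hu : ∀ a, a ∈ u ++ [b]) (hb : b ∉ u) :
    IsKUniversal (k + 1) (u ++ b :: v) ↔ IsKUniversal k v := by
  refine ⟨fun h x hx => ?_, fun h x hx => ?_⟩
  · exact (cons_sublist_append_cons_iff hb).1 (h (b :: x) (by simpa using hx))
  · match x, hx with
    | [], _ => exact nil_sublist _
    | a :: x, hx =>
      have hsub := (singleton_sublist.2 (hu a)).append (h x (by simpa using hx))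
      simpa using hsub

variable [Nonempty α]

theorem bddAbove_setOf_isKUniversal (w : List α) : BddAbove {k | IsKUniversal k w} := by
  refine ⟨w.length, fun k hk => ?_⟩
  simpa using (hk (replicate k (Classical.arbitrary α)) (by simp)).length_le

theorem le_univIndex_iff {k : ℕ} {w : List α} : k ≤ univIndex w ↔ IsKUniversal k w :=
  ⟨fun hk => (Nat.sSup_mem ⟨0, isKUniversal_zero w⟩ (bddAbove_setOf_isKUniversal w)).mono hk,
    fun hk => le_csSup (bddAbove_setOf_isKUniversal w) hk⟩

theorem univIndex_eq_zero {w : List α} (hw : ¬ ∀ a, a ∈ w) : univIndex w = 0 := by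
  rw [← isKUniversal_one_iff, ← le_univIndex_iff] at hw
  omega

theorem univIndex_append_cons {u v : List α} {b : α} (hu : ∀ a, a ∈ u ++ [b]) (hb : b ∉ u) :
    univIndex (u ++ b :: v) = univIndex v + 1 := by
  refine eq_of_forall_le_iff fun k => ?_
  cases k with
  | zero => simp
  | succ k =>
    rw [le_univIndex_iff, isKUniversal_succ_append_cons_iff hu hb, ← le_univIndex_iff]
    omega

end Universality

section Arches

variable {α : Type*} [Fintype α] [DecidableEq α]

/-- The length of the first arch, exactly as `archFactAux` computes it. -/
noncomputable def archLength (w : List α) : ℕ :=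
  sInf {n | Finset.univ ⊆ (w.take n).toFinset}

theorem exists_eq_append_cons_drop_archLength [Nonempty α] {w : List α} (hw : ∀ a, a ∈ w) :
    ∃ u b, w = u ++ b :: w.drop (archLength w) ∧ (∀ a, a ∈ u ++ [b]) ∧ b ∉ u := by
  have hne : {n | Finset.univ ⊆ (w.take n).toFinset}.Nonempty :=
    ⟨w.length, univ_subset_toFinset_iff.2 (by simpa using hw)⟩
  have harch : ∀ a, a ∈ w.take (archLength w) := univ_subset_toFinset_iff.1 (Nat.sInf_mem hne)
  have hmin : ∀ m < archLength w, ¬ ∀ a, a ∈ w.take m := fun m hm h =>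
    Nat.notMem_of_lt_sInf hm (univ_subset_toFinset_iff.2 h)
  obtain ⟨m, hm⟩ : ∃ m, archLength w = m + 1 :=
    Nat.exists_eq_add_one.2 <| Nat.pos_of_ne_zero fun h0 => by
      simpa [h0] using harch (Classical.arbitrary α)
  have hlt : m < w.length := by
    by_contra! hle
    exact hmin m (by omega) (by simpa [take_of_length_le hle] using hw)
  have htake : w.take (archLength w) = w.take m ++ [w[m]] := by
    rw [hm, take_add_one, getElem?_eq_getElem hlt, Option.toList_some]
  refine ⟨w.take m, w[m], ?_, htake ▸ harch, fun hb => hmin m (by omega) fun a => ?_⟩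
  · rw [hm, ← drop_eq_getElem_cons hlt, take_append_drop]
  · have ha := harch a
    rw [htake, mem_append, mem_singleton] at ha
    rcases ha with ha | rfl
    exacts [ha, hb]

theorem length_archFactAux_fst [Nonempty α] {fuel : ℕ} {w : List α} (hw : w.length ≤ fuel) :
    (archFactAux fuel w).1.length = univIndex w := by
  induction fuel generalizing w with
  | zero =>
    have hnil : ¬ ∀ a, a ∈ ([] : List α) := fun h => not_mem_nil (h (Classical.arbitrary α))
    rw [length_eq_zero_iff.1 (Nat.le_zero.1 hw), univIndex_eq_zero hnil]
    rfl
  | succ fuel ih =>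
    by_cases hfull : ∀ a, a ∈ w
    · obtain ⟨u, b, hsplit, hu, hb⟩ := exists_eq_append_cons_drop_archLength hfull
      have hlen : (w.drop (archLength w)).length ≤ fuel := by
        have := congrArg length hsplit
        simp only [length_append, length_cons] at this
        omega
      have hindex : univIndex w = univIndex (w.drop (archLength w)) + 1 := by
        conv_lhs => rw [hsplit]
        exact univIndex_append_cons hu hb
      simp only [archFactAux, univ_subset_toFinset_iff.2 hfull, if_true]
      rw [length_cons, hindex, ← ih hlen]
      rfl
    · simp only [archFactAux, univ_subset_toFinset_iff, hfull, if_false]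
      exact (univIndex_eq_zero hfull).symm

end Arches

/-- the number of arches in the arch factorization of `w` equals the
universality index `ι(w)`. -/
theorem stmt17 {α : Type*} [Fintype α] [DecidableEq α] [Nonempty α]
    (w : List α) : (archFact w).1.length = univIndex w :=
  length_archFactAux_fst le_rfl
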